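/- arXiv:2604.01468 — 6 statements merged into one kernel-verified Lean document; each statement's English description precedes it below -/
import Mathlib

section
/- The extreme points of the polytope Q of ε-neighbor indistinguishable probability vectors in ℝ^n are exactly the ε-scales. That is, a vector t ∈ Q is an extreme point of Q if and only if for every i ∈ {0,...,n-2}, either t_i = e^ε t_{i+1} or t_i = e^{-ε} t_{i+1}. -/
def NeighborIndist (ε : ℝ) (n : ℕ) (v : Fin (n+1) → ℝ) : Prop :=
  ∀ i : Fin n, Real.exp (-ε) * v i.succ ≤ v i.castSucc ∧ v i.castSucc ≤ Real.exp ε * v i.succ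

/-!
If the constraint between `t i` and `t (i + 1)` is slack, rescale the blocks `j ≤ i` and `j > i`
by `1 + s T` and `1 - s S`, where `S` and `T` are the masses of the blocks: the sum is unchanged,
the constraints inside each block are homogeneous, and the slack one survives for all small `s`
of either sign, so `t` is the midpoint of two points of `Q`. Conversely, a tight constraint is a
supporting hyperplane of `Q`, so both ends of an open segment in `Q` through an `ε`-scale `t`
satisfy the recurrence `v i = r i * v (i + 1)` of `t`, with `r i > 0`; a solution of that
recurrence is determined by its sum.
-/

open Real Finset Filter Topology

theorem notMem_extremePoints_of_eventually_add_smul_mem {E : Type*} [AddCommGroup E]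
    [Module ℝ E] {A : Set E} {x v : E} (hv : v ≠ 0) (h : ∀ᶠ s in 𝓝 (0 : ℝ), x + s • v ∈ A) :
    x ∉ A.extremePoints ℝ := by
  intro hx
  have hneg : ∀ᶠ s in 𝓝 (0 : ℝ), x + (-s) • v ∈ A :=
    (continuous_neg.tendsto' (0 : ℝ) 0 neg_zero).eventually h
  obtain ⟨s, ⟨hs₁, hs₂⟩, hs⟩ :=
    (((h.and hneg).filter_mono nhdsWithin_le_nhds).and self_mem_nhdsWithin).exists
      (f := 𝓝[≠] (0 : ℝ))
  have hmid : x ∈ openSegment ℝ (x + s • v) (x + (-s) • v) :=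
    ⟨1 / 2, 1 / 2, by norm_num, by norm_num, by norm_num, by module⟩
  exact hs (by simpa [hv] using hx.2 hs₁ hs₂ hmid)

theorem LinearMap.eq_zero_of_nonneg_of_mem_openSegment {𝕜 E : Type*} [Field 𝕜] [LinearOrder 𝕜]
    [IsStrictOrderedRing 𝕜] [AddCommGroup E] [Module 𝕜 E] (f : E →ₗ[𝕜] 𝕜) {x y z : E}
    (hx : 0 ≤ f x) (hy : 0 ≤ f y) (hz : z ∈ openSegment 𝕜 x y) (hfz : f z = 0) : f x = 0 := by
  obtain ⟨a, b, ha, hb, -, rfl⟩ := hz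
  rw [map_add, map_smul, map_smul, smul_eq_mul, smul_eq_mul] at hfz
  have := ((add_eq_zero_iff_of_nonneg (mul_nonneg ha.le hx) (mul_nonneg hb.le hy)).1 hfz).1
  exact (mul_eq_zero.1 this).resolve_left ha.ne'

theorem eq_zero_of_recurrence_of_last_eq_zero {M : Type*} [MulZeroClass M] {n : ℕ}
    {r : Fin n → M} {v : Fin (n + 1) → M} (hv : ∀ i, v i.castSucc = r i * v i.succ)
    (hlast : v (Fin.last n) = 0) : v = 0 :=
  funext fun j => Fin.reverseInduction (motive := fun j => v j = 0) hlast
    (fun i h => by rw [hv, h, mul_zero]) j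

section Recurrence

variable {R : Type*} [CommRing R] [LinearOrder R] [IsStrictOrderedRing R] {n : ℕ}
  {r : Fin n → R} {v : Fin (n + 1) → R}

theorem pos_of_recurrence_of_last_pos (hr : ∀ i, 0 < r i)
    (hv : ∀ i, v i.castSucc = r i * v i.succ) (hlast : 0 < v (Fin.last n)) (j : Fin (n + 1)) :
    0 < v j :=
  Fin.reverseInduction hlast (fun i h => by rw [hv]; exact mul_pos (hr i) h) j

theorem eq_zero_of_recurrence_of_sum_eq_zero (hr : ∀ i, 0 < r i)
    (hv : ∀ i, v i.castSucc = r i * v i.succ) (hsum : ∑ j, v j = 0) : v = 0 := by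
  refine eq_zero_of_recurrence_of_last_eq_zero hv ?_
  rcases lt_trichotomy (v (Fin.last n)) 0 with hneg | hzero | hpos
  · have hv' : ∀ i, (-v) i.castSucc = r i * (-v) i.succ := fun i => by simp [hv]
    have := sum_pos (fun j _ => pos_of_recurrence_of_last_pos hr hv' (by simpa) j)
      univ_nonempty
    simp [sum_neg_distrib, hsum] at this
  · exact hzero
  · have := sum_pos (fun j _ => pos_of_recurrence_of_last_pos hr hv hpos j) univ_nonempty
    exact absurd hsum this.ne'

theorem eq_of_recurrence_of_sum_eq (hr : ∀ i, 0 < r i) {w : Fin (n + 1) → R}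
    (hv : ∀ i, v i.castSucc = r i * v i.succ) (hw : ∀ i, w i.castSucc = r i * w i.succ)
    (hsum : ∑ j, v j = ∑ j, w j) : v = w :=
  sub_eq_zero.1 <| eq_zero_of_recurrence_of_sum_eq_zero hr (fun i => by simp [hv, hw, mul_sub])
    (by simp only [Pi.sub_apply, sum_sub_distrib, hsum, sub_self])

end Recurrence

theorem NeighborIndist.ite_mul {ε : ℝ} {n : ℕ} {t : Fin (n + 1) → ℝ} (ht : NeighborIndist ε n t)
    (i : Fin n) {a b : ℝ} (ha : 0 ≤ a) (hb : 0 ≤ b)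
    (hlow : exp (-ε) * (b * t i.succ) ≤ a * t i.castSucc)
    (hup : a * t i.castSucc ≤ exp ε * (b * t i.succ)) :
    NeighborIndist ε n (fun j => (if j ≤ i.castSucc then a else b) * t j) := by
  have scaled : ∀ c, 0 ≤ c → ∀ k : Fin n,
      exp (-ε) * (c * t k.succ) ≤ c * t k.castSucc ∧ c * t k.castSucc ≤ exp ε * (c * t k.succ) :=
    fun c hc k => ⟨by nlinarith [(ht k).1], by nlinarith [(ht k).2]⟩
  intro k
  rcases lt_trichotomy k i with hk | rfl | hk
  · simpa [hk.le, hk] using scaled a ha k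
  · simpa using And.intro hlow hup
  · simpa [hk.not_ge, hk.not_gt] using scaled b hb k

def neighborPolytope (ε : ℝ) (n : ℕ) : Set (Fin (n + 1) → ℝ) :=
  {t | (∀ i, 0 ≤ t i) ∧ (∑ i, t i = 1) ∧ NeighborIndist ε n t}

theorem notMem_extremePoints_neighborPolytope {ε : ℝ} {n : ℕ} {t : Fin (n + 1) → ℝ}
    (ht : t ∈ neighborPolytope ε n) (i : Fin n) (hlow : exp (-ε) * t i.succ < t i.castSucc)
    (hup : t i.castSucc < exp ε * t i.succ) : t ∉ (neighborPolytope ε n).extremePoints ℝ := by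
  obtain ⟨h0, hsum, hN⟩ := ht
  set S := ∑ j with j ≤ i.castSucc, t j
  set T := ∑ j with ¬j ≤ i.castSucc, t j
  have hcast : 0 < t i.castSucc := (mul_nonneg (exp_pos _).le (h0 _)).trans_lt hlow
  have hsucc : 0 < t i.succ := pos_of_mul_pos_right (hcast.trans hup) (exp_pos ε).le
  have hT : 0 < T := hsucc.trans_le <| single_le_sum (fun j _ => h0 j) (by simp)
  let v : Fin (n + 1) → ℝ := fun j => (if j ≤ i.castSucc then T else -S) * t j
  have hv : v ≠ 0 := fun h => by
    have := congrFun h i.castSucc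
    simp only [v, le_refl, if_true, Pi.zero_apply] at this
    exact (mul_pos hT hcast).ne' this
  have hv_sum : ∑ j, v j = 0 :=
    calc ∑ j, v j = T * S + -S * T := by simp only [v, ite_mul, sum_ite, ← mul_sum]; rfl
      _ = 0 := by ring
  have hline (s : ℝ) :
      t + s • v = fun j => (if j ≤ i.castSucc then 1 + s * T else 1 - s * S) * t j :=
    funext fun j => by
      simp only [v, Pi.add_apply, Pi.smul_apply, smul_eq_mul]
      split_ifs <;> ring
  refine notMem_extremePoints_of_eventually_add_smul_mem hv ?_
  have h1 : ∀ᶠ s in 𝓝 (0 : ℝ), 0 < 1 + s * T :=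
    ContinuousAt.eventually_lt (by fun_prop) (by fun_prop) (by simp)
  have h2 : ∀ᶠ s in 𝓝 (0 : ℝ), 0 < 1 - s * S :=
    ContinuousAt.eventually_lt (by fun_prop) (by fun_prop) (by simp)
  have h3 : ∀ᶠ s in 𝓝 (0 : ℝ), exp (-ε) * ((1 - s * S) * t i.succ) < (1 + s * T) * t i.castSucc :=
    ContinuousAt.eventually_lt (by fun_prop) (by fun_prop) (by simpa using hlow)
  have h4 : ∀ᶠ s in 𝓝 (0 : ℝ), (1 + s * T) * t i.castSucc < exp ε * ((1 - s * S) * t i.succ) :=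
    ContinuousAt.eventually_lt (by fun_prop) (by fun_prop) (by simpa using hup)
  filter_upwards [h1, h2, h3, h4] with s h1 h2 h3 h4
  refine ⟨?_, ?_, ?_⟩
  · rw [hline]
    exact fun j => mul_nonneg (by split_ifs <;> positivity) (h0 j)
  · simp only [Pi.add_apply, Pi.smul_apply, smul_eq_mul, sum_add_distrib, ← mul_sum, hsum,
      hv_sum, mul_zero, add_zero]
  · rw [hline]
    exact hN.ite_mul i h1.le h2.le h3.le h4.le

theorem mem_extremePoints_neighborPolytope {ε : ℝ} {n : ℕ} {t : Fin (n + 1) → ℝ}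
    (ht : t ∈ neighborPolytope ε n)
    (hscale : ∀ i : Fin n, t i.castSucc = exp ε * t i.succ ∨ t i.castSucc = exp (-ε) * t i.succ) :
    t ∈ (neighborPolytope ε n).extremePoints ℝ := by
  refine ⟨ht, fun x hx y hy hseg => ?_⟩
  have tight : ∀ i : Fin n, ∃ r, 0 < r ∧ t i.castSucc = r * t i.succ ∧
      x i.castSucc = r * x i.succ := by
    intro i
    let gap (c : ℝ) : (Fin (n + 1) → ℝ) →ₗ[ℝ] ℝ :=
      c • LinearMap.proj i.succ - LinearMap.proj i.castSucc
    have gap_apply (c : ℝ) (w : Fin (n + 1) → ℝ) : gap c w = c * w i.succ - w i.castSucc := rfl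
    rcases hscale i with h | h
    · refine ⟨exp ε, exp_pos ε, h, ?_⟩
      have := (gap (exp ε)).eq_zero_of_nonneg_of_mem_openSegment
        (by simp [gap_apply, (hx.2.2 i).2]) (by simp [gap_apply, (hy.2.2 i).2]) hseg
        (by simp [gap_apply, h])
      rw [gap_apply] at this
      linarith
    · refine ⟨exp (-ε), exp_pos (-ε), h, ?_⟩
      have := (-gap (exp (-ε))).eq_zero_of_nonneg_of_mem_openSegment
        (by simp [gap_apply, (hx.2.2 i).1]) (by simp [gap_apply, (hy.2.2 i).1]) hseg
        (by simp [gap_apply, h])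
      rw [LinearMap.neg_apply, gap_apply] at this
      linarith
  choose r hr htr hxr using tight
  exact eq_of_recurrence_of_sum_eq hr hxr htr (hx.2.1.trans ht.2.1.symm)

theorem stmt4_general (ε : ℝ) (n : ℕ)
    (Q : Set (Fin (n+1) → ℝ))
    (hQ : Q = {t | (∀ i, 0 ≤ t i) ∧ (∑ i, t i = 1) ∧ NeighborIndist ε n t})
    (t : Fin (n+1) → ℝ) (ht : t ∈ Q) :
    t ∈ Q.extremePoints ℝ ↔
      ∀ i : Fin n, t i.castSucc = Real.exp ε * t i.succ ∨
        t i.castSucc = Real.exp (-ε) * t i.succ := by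
  change Q = neighborPolytope ε n at hQ
  subst hQ
  refine ⟨fun hext i => ?_, mem_extremePoints_neighborPolytope ht⟩
  by_contra! hne
  exact notMem_extremePoints_neighborPolytope ht i (lt_of_le_of_ne (ht.2.2 i).1 (Ne.symm hne.2))
    (lt_of_le_of_ne (ht.2.2 i).2 hne.1) hext

/-- The extreme points of the polytope Q of ε-neighbor indistinguishable probability
vectors are exactly the ε-scales. -/
theorem stmt4 (ε : ℝ) (hε : 0 < ε) (n : ℕ)
    (Q : Set (Fin (n+1) → ℝ))
    (hQ : Q = {t | (∀ i, 0 ≤ t i) ∧ (∑ i, t i = 1) ∧ NeighborIndist ε n t})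
    (t : Fin (n+1) → ℝ) (ht : t ∈ Q) :
    t ∈ Q.extremePoints ℝ ↔
      ∀ i : Fin n, t i.castSucc = Real.exp ε * t i.succ ∨
        t i.castSucc = Real.exp (-ε) * t i.succ :=
  stmt4_general ε n Q hQ t ht
end

section
/- Every column of an ε-differentially private count mechanism T (a row-stochastic n × n matrix with every column ε-neighbor indistinguishable) can be written as a conic combination of ε-scales. -/
def IsScale (ε : ℝ) (n : ℕ) (s : Fin (n+1) → ℝ) : Prop :=
  (∀ i, 0 ≤ s i) ∧ (∑ i, s i = 1) ∧
  ∀ i : Fin n, s i.castSucc = Real.exp ε * s i.succ ∨ s i.castSucc = Real.exp (-ε) * s i.succ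

/-!
Induction on the length. For a nonnegative neighbor-indistinguishable `v`, its tail is a conic
combination of scales by induction, and `v 0` lies between `e^{-ε} v 1` and `e^{ε} v 1`, so it is
a convex combination of the two. Hence `v` is a convex combination of the two vectors obtained by
prepending `e^{∓ε}` times the first entry to the tail. The map `s ↦ cons (c * s 0) s` is linear and,
for `c = e^{±ε}`, sends a scale to a positive multiple of a scale, so it preserves the cone of
conic combinations of scales.
-/

open Real

abbrev scaleCone (ε : ℝ) (n : ℕ) : PointedCone ℝ (Fin (n+1) → ℝ) :=
  PointedCone.hull ℝ {s | IsScale ε n s}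

variable {ε c : ℝ} {n : ℕ}

lemma IsScale.mem_scaleCone {s : Fin (n+1) → ℝ} (hs : IsScale ε n s) : s ∈ scaleCone ε n :=
  PointedCone.subset_hull hs

lemma isScale_const_one : IsScale ε 0 (fun _ => 1) :=
  ⟨fun _ => zero_le_one, by simp, fun i => i.elim0⟩

lemma mem_scaleCone_of_ratio {v : Fin (n+1) → ℝ} (hv : 0 ≤ v)
    (hr : ∀ i : Fin n, v i.castSucc = exp ε * v i.succ ∨ v i.castSucc = exp (-ε) * v i.succ) :
    v ∈ scaleCone ε n := by
  set t := ∑ i, v i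
  rcases (Fintype.sum_nonneg hv : 0 ≤ t).eq_or_lt with ht | ht
  · rw [(Fintype.sum_eq_zero_iff_of_nonneg hv).1 ht.symm]
    exact zero_mem _
  · have hscale : IsScale ε n (t⁻¹ • v) := by
      refine ⟨fun i => mul_nonneg (inv_nonneg.2 ht.le) (hv i), ?_, fun i => ?_⟩
      · simp [← Finset.mul_sum, ht.ne', t]
      · simp only [Pi.smul_apply, smul_eq_mul]
        rcases hr i with h | h <;> rw [h] <;> [left; right] <;> ring
    exact (PointedCone.smul_mem_iff _ (inv_pos.2 ht)).1 hscale.mem_scaleCone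

lemma cons_mem_scaleCone_of_isScale (hc : c = exp ε ∨ c = exp (-ε)) {s : Fin (n+1) → ℝ}
    (hs : IsScale ε n s) : (Fin.cons (c * s 0) s : Fin (n+2) → ℝ) ∈ scaleCone ε (n+1) := by
  have hc0 : 0 ≤ c := by rcases hc with rfl | rfl <;> exact (exp_pos _).le
  refine mem_scaleCone_of_ratio (fun i => Fin.cases (mul_nonneg hc0 (hs.1 0)) hs.1 i) fun i => ?_
  induction i using Fin.cases with
  | zero => rcases hc with rfl | rfl <;> simp
  | succ i => simpa [← Fin.succ_castSucc] using hs.2.2 i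

lemma cons_mem_scaleCone (hc : c = exp ε ∨ c = exp (-ε)) {v : Fin (n+1) → ℝ}
    (hv : v ∈ scaleCone ε n) : (Fin.cons (c * v 0) v : Fin (n+2) → ℝ) ∈ scaleCone ε (n+1) := by
  let f : (Fin (n+1) → ℝ) →ₗ[ℝ] Fin (n+2) → ℝ :=
    LinearMap.vecCons (c • LinearMap.proj 0) LinearMap.id
  have : scaleCone ε n ≤ (scaleCone ε (n+1)).comap f :=
    Submodule.span_le.2 fun s hs => cons_mem_scaleCone_of_isScale hc hs
  exact this hv

lemma NeighborIndist.tail {v : Fin (n+2) → ℝ} (hv : NeighborIndist ε (n+1) v) :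
    NeighborIndist ε n (Fin.tail v) := fun i => by
  simpa only [Fin.tail, Fin.succ_castSucc] using hv i.succ

lemma mem_scaleCone_of_neighborIndist {v : Fin (n+1) → ℝ} (hv_nonneg : 0 ≤ v)
    (hv : NeighborIndist ε n v) : v ∈ scaleCone ε n := by
  induction n with
  | zero =>
    convert PointedCone.smul_mem _ (hv_nonneg 0) (isScale_const_one (ε := ε)).mem_scaleCone using 1
    ext i
    simp [Fin.fin_one_eq_zero i]
  | succ n ih =>
    have htail := ih (fun i => hv_nonneg i.succ) hv.tail
    obtain ⟨a, b, ha, hb, hab, hconv⟩ : v 0 ∈ segment ℝ (exp (-ε) * v 1) (exp ε * v 1) :=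
      Icc_subset_segment (hv 0)
    have hsplit : v = a • (Fin.cons (exp (-ε) * Fin.tail v 0) (Fin.tail v) : Fin (n+2) → ℝ)
        + b • Fin.cons (exp ε * Fin.tail v 0) (Fin.tail v) := by
      ext i
      induction i using Fin.cases with
      | zero => simpa [Fin.tail] using hconv.symm
      | succ i => simp [Fin.tail, ← add_mul, hab]
    rw [hsplit]
    exact add_mem (PointedCone.smul_mem _ ha (cons_mem_scaleCone (Or.inr rfl) htail))
      (PointedCone.smul_mem _ hb (cons_mem_scaleCone (Or.inl rfl) htail))

theorem stmt5_general (ε : ℝ) (n : ℕ)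
    (T : Matrix (Fin (n+1)) (Fin (n+1)) ℝ)
    (hpos : ∀ i j, 0 ≤ T i j)
    (hcol : ∀ j, NeighborIndist ε n (fun i => T i j)) (j : Fin (n+1)) :
    ∃ (m : ℕ) (s : Fin m → Fin (n+1) → ℝ) (α : Fin m → ℝ),
      (∀ l, IsScale ε n (s l)) ∧ (∀ l, 0 ≤ α l) ∧
      ∀ i, T i j = ∑ l, α l * s l i := by
  obtain ⟨m, α, s, hsum⟩ :=
    Submodule.mem_span_set'.1 (mem_scaleCone_of_neighborIndist (fun i => hpos i j) (hcol j))
  refine ⟨m, fun l => s l, fun l => α l, fun l => (s l).2, fun l => (α l).2, fun i => ?_⟩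
  rw [← congrFun hsum i]
  simp [Finset.sum_apply, ← Nonneg.coe_smul]

/-- Every column of an ε-differentially private count mechanism can be written as a
conic combination of ε-scales. -/
theorem stmt5 (ε : ℝ) (hε : 0 < ε) (n : ℕ)
    (T : Matrix (Fin (n+1)) (Fin (n+1)) ℝ)
    (hpos : ∀ i j, 0 ≤ T i j) (hrow : ∀ i, ∑ j, T i j = 1)
    (hcol : ∀ j, NeighborIndist ε n (fun i => T i j)) (j : Fin (n+1)) :
    ∃ (m : ℕ) (s : Fin m → Fin (n+1) → ℝ) (α : Fin m → ℝ),
      (∀ l, IsScale ε n (s l)) ∧ (∀ l, 0 ≤ α l) ∧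
      ∀ i, T i j = ∑ l, α l * s l i :=
  stmt5_general ε n T hpos hcol j
end

section
/- Let U be the polytope of ε-differentially private count mechanisms. If T ∈ U has all entries strictly positive, then T is an extreme point of U if and only if the columns of T are linearly independent positive multiples of ε-scales. -/
open Filter Topology Matrix

def privateMechanisms (ε : ℝ) (n : ℕ) (ι : Type*) [Fintype ι] : Set (Matrix (Fin (n+1)) ι ℝ) :=
  {T | (∀ i j, 0 ≤ T i j) ∧ (∀ i, ∑ j, T i j = 1) ∧ ∀ j, NeighborIndist ε n (fun i => T i j)}

def IsTightAt (ε : ℝ) {n : ℕ} (v : Fin (n+1) → ℝ) (i : Fin n) : Prop :=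
  v i.castSucc = Real.exp ε * v i.succ ∨ v i.castSucc = Real.exp (-ε) * v i.succ

theorem notMem_extremePoints_of_add_mem_of_sub_mem {𝕜 E : Type*} [Field 𝕜] [LinearOrder 𝕜]
    [IsStrictOrderedRing 𝕜] [AddCommGroup E] [Module 𝕜 E] {A : Set E} {x d : E} (hd : d ≠ 0)
    (hadd : x + d ∈ A) (hsub : x - d ∈ A) : x ∉ A.extremePoints 𝕜 := by
  intro hx
  have hmid : x ∈ openSegment 𝕜 (x + d) (x - d) :=
    ⟨1 / 2, 1 / 2, by norm_num, by norm_num, by norm_num, by module⟩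
  exact hd (by simpa using (mem_extremePoints_iff_left.1 hx).2 _ hadd _ hsub hmid)

theorem eq_of_forall_eq_mul_of_linearIndependent {m ι : Type*} [Fintype ι] {T Y : Matrix m ι ℝ}
    (hli : LinearIndependent ℝ fun j i => T i j) (hrow : ∀ i, ∑ j, Y i j = ∑ j, T i j)
    {μ : ι → ℝ} (hμ : ∀ i j, Y i j = μ j * T i j) : Y = T := by
  have hμ1 : ∀ j, μ j - 1 = 0 := by
    refine Fintype.linearIndependent_iff.1 hli _ (funext fun i => ?_)
    simp [Finset.sum_apply, sub_mul, Finset.sum_sub_distrib, ← hμ, hrow]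
  ext i j
  rw [hμ, sub_eq_zero.1 (hμ1 j), one_mul]

theorem eventually_pos_one_add_mul (c : ℝ) : ∀ᶠ δ in 𝓝 (0:ℝ), 0 < 1 + δ * c :=
  continuousAt_const.eventually_lt (by fun_prop) (by simp)

section Column

variable {ε : ℝ} {n : ℕ}

theorem IsTightAt.smul {v : Fin (n+1) → ℝ} {i : Fin n} (h : IsTightAt ε v i) (c : ℝ) :
    IsTightAt ε (c • v) i := by
  simp only [IsTightAt, Pi.smul_apply, smul_eq_mul]
  rcases h with h | h
  · exact Or.inl (by rw [h]; ring)
  · exact Or.inr (by rw [h]; ring)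

theorem exists_smul_isScale {v : Fin (n+1) → ℝ} (hv : ∀ k, 0 < v k)
    (ht : ∀ i, IsTightAt ε v i) :
    ∃ (c : ℝ) (s : Fin (n+1) → ℝ), 0 < c ∧ IsScale ε n s ∧ v = c • s := by
  have hc : 0 < ∑ k, v k := Finset.sum_pos (fun k _ => hv k) Finset.univ_nonempty
  have hs : IsScale ε n ((∑ k, v k)⁻¹ • v) := by
    refine ⟨fun k => ?_, ?_, fun i => (ht i).smul _⟩
    · exact mul_nonneg (inv_nonneg.2 hc.le) (hv k).le
    · simp [← Finset.mul_sum, hc.ne']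
  refine ⟨∑ k, v k, _, hc, hs, ?_⟩
  rw [smul_smul, mul_inv_cancel₀ hc.ne', one_smul]

theorem eq_smul_of_forall_ratio {t y : Fin (n+1) → ℝ} (ht : t (Fin.last n) ≠ 0)
    (h : ∀ i : Fin n, ∃ r, t i.castSucc = r * t i.succ ∧ y i.castSucc = r * y i.succ) :
    y = (y (Fin.last n) / t (Fin.last n)) • t := by
  funext k
  induction k using Fin.reverseInduction with
  | last => simp [div_mul_cancel₀ _ ht]
  | cast i ih =>
    obtain ⟨r, hti, hyi⟩ := h i
    simp only [Pi.smul_apply, smul_eq_mul] at ih ⊢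
    rw [hti, hyi, ih]
    ring

theorem NeighborIndist.exists_common_ratio {a b : ℝ} {t y z : Fin (n+1) → ℝ} (ha : 0 < a)
    (hb : 0 < b) (hy : NeighborIndist ε n y) (hz : NeighborIndist ε n z)
    (htyz : t = a • y + b • z) {i : Fin n} (ht : IsTightAt ε t i) :
    ∃ r, t i.castSucc = r * t i.succ ∧ y i.castSucc = r * y i.succ := by
  obtain ⟨hy₁, hy₂⟩ := hy i
  obtain ⟨hz₁, hz₂⟩ := hz i
  rcases ht with h | h <;> refine ⟨_, h, ?_⟩ <;>
    simp only [htyz, Pi.add_apply, Pi.smul_apply, smul_eq_mul] at h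
  · nlinarith [mul_le_mul_of_nonneg_left hz₂ hb.le]
  · nlinarith [mul_le_mul_of_nonneg_left hz₁ hb.le]

theorem NeighborIndist.slack_of_not_isTightAt {v : Fin (n+1) → ℝ} (hv : NeighborIndist ε n v)
    {i : Fin n} (h : ¬ IsTightAt ε v i) :
    Real.exp (-ε) * v i.succ < v i.castSucc ∧ v i.castSucc < Real.exp ε * v i.succ := by
  simp only [IsTightAt, not_or] at h
  exact ⟨(hv i).1.lt_of_ne (Ne.symm h.2), (hv i).2.lt_of_ne h.1⟩

theorem NeighborIndist.eventually_add_smul {v r : Fin (n+1) → ℝ} (hv : NeighborIndist ε n v)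
    (h : ∀ i : Fin n, r i.castSucc = r i.succ ∨ ¬ IsTightAt ε v i) :
    ∀ᶠ δ in 𝓝 (0:ℝ), NeighborIndist ε n (v + δ • (r * v)) := by
  refine eventually_all.2 fun i => ?_
  simp only [Pi.add_apply, Pi.smul_apply, Pi.mul_apply, smul_eq_mul]
  rcases h i with hr | hslack
  · filter_upwards [eventually_pos_one_add_mul (r i.succ)] with δ hδ
    obtain ⟨h₁, h₂⟩ := hv i
    rw [hr]
    constructor <;> nlinarith
  · obtain ⟨h₁, h₂⟩ := hv.slack_of_not_isTightAt hslack
    have hcast : ContinuousAt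
        (fun δ : ℝ => v i.castSucc + δ * (r i.castSucc * v i.castSucc)) 0 := by fun_prop
    have hsucc : ContinuousAt (fun δ : ℝ => v i.succ + δ * (r i.succ * v i.succ)) 0 := by
      fun_prop
    filter_upwards [(continuousAt_const.mul hsucc).eventually_lt hcast (by simpa using h₁),
      hcast.eventually_lt (continuousAt_const.mul hsucc) (by simpa using h₂)] with δ h₁ h₂
    exact ⟨h₁.le, h₂.le⟩

end Column

section Mechanisms

variable {ε : ℝ} {n : ℕ} {ι : Type*} [Fintype ι]

theorem eventually_add_smul_hadamard_mem_privateMechanisms {T ρ : Matrix (Fin (n+1)) ι ℝ}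
    (hT : T ∈ privateMechanisms ε n ι) (hρ : ∀ k, ∑ j, ρ k j * T k j = 0)
    (hslack : ∀ j i, ρ i.castSucc j = ρ i.succ j ∨ ¬ IsTightAt ε (fun k => T k j) i) :
    ∀ᶠ δ in 𝓝 (0:ℝ), T + δ • ρ ⊙ T ∈ privateMechanisms ε n ι := by
  obtain ⟨hnn, hrow, hnb⟩ := hT
  have hfactor : ∀ᶠ δ in 𝓝 (0:ℝ), ∀ k j, 0 < 1 + δ * ρ k j :=
    eventually_all.2 fun k => eventually_all.2 fun j => eventually_pos_one_add_mul _
  have hcols : ∀ᶠ δ in 𝓝 (0:ℝ), ∀ j, NeighborIndist ε n fun k => (T + δ • ρ ⊙ T) k j :=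
    eventually_all.2 fun j => (hnb j).eventually_add_smul (r := fun k => ρ k j) (hslack j)
  filter_upwards [hfactor, hcols] with δ hδ hcol
  refine ⟨fun k j => ?_, fun k => ?_, hcol⟩
  · have : (T + δ • ρ ⊙ T) k j = (1 + δ * ρ k j) * T k j := by simp; ring
    rw [this]
    exact mul_nonneg (hδ k j).le (hnn k j)
  · simp [Finset.sum_add_distrib, ← Finset.mul_sum, hρ k, hrow k]

theorem notMem_extremePoints_of_perturbation {T ρ : Matrix (Fin (n+1)) ι ℝ}
    (hT : T ∈ privateMechanisms ε n ι) (hpos : ∀ i j, 0 < T i j)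
    (hρ : ∀ k, ∑ j, ρ k j * T k j = 0)
    (hslack : ∀ j i, ρ i.castSucc j = ρ i.succ j ∨ ¬ IsTightAt ε (fun k => T k j) i)
    (hne : ρ ≠ 0) : T ∉ (privateMechanisms ε n ι).extremePoints ℝ := by
  have hev := eventually_add_smul_hadamard_mem_privateMechanisms hT hρ hslack
  have hneg := (continuous_neg.tendsto' (0:ℝ) 0 neg_zero).eventually hev
  obtain ⟨δ, ⟨hadd, hsub⟩, hδ⟩ :=
    ((hev.and hneg).filter_mono nhdsWithin_le_nhds |>.and self_mem_nhdsWithin).exists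
      (f := 𝓝[≠] (0:ℝ))
  refine notMem_extremePoints_of_add_mem_of_sub_mem ?_ hadd (by simpa [sub_eq_add_neg] using hsub)
  obtain ⟨k, j, hkj⟩ : ∃ k j, ρ k j ≠ 0 := by
    by_contra! h
    exact hne (Matrix.ext h)
  intro h
  have := congrFun (congrFun h k) j
  simp [hkj, (hpos k j).ne'] at this
  exact hδ this

theorem linearIndependent_of_mem_extremePoints {T : Matrix (Fin (n+1)) ι ℝ}
    (hpos : ∀ i j, 0 < T i j) (hT : T ∈ (privateMechanisms ε n ι).extremePoints ℝ) :
    LinearIndependent ℝ fun j i => T i j := by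
  by_contra hli
  obtain ⟨g, hg, j, hj⟩ := Fintype.not_linearIndependent_iff.1 hli
  refine notMem_extremePoints_of_perturbation hT.1 hpos (ρ := fun _ j => g j) (fun k => ?_)
    (fun _ _ => Or.inl rfl) (fun h => hj (congrFun (congrFun h 0) j)) hT
  simpa [Finset.sum_apply] using congrFun hg k

theorem isTightAt_of_mem_extremePoints {T : Matrix (Fin (n+1)) ι ℝ} (hpos : ∀ i j, 0 < T i j)
    (hspan : Submodule.span ℝ (Set.range fun j i => T i j) = ⊤)
    (hT : T ∈ (privateMechanisms ε n ι).extremePoints ℝ) (j₀ : ι) (i₀ : Fin n) :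
    IsTightAt ε (fun k => T k j₀) i₀ := by
  classical
  by_contra hslack
  obtain ⟨γ, hγ⟩ := (Submodule.mem_span_range_iff_exists_fun ℝ).1
    (hspan ▸ Submodule.mem_top : (fun k => if k ≤ i₀.castSucc then T k j₀ else 0) ∈ _)
  let ρ : Matrix (Fin (n+1)) ι ℝ := fun k j => (if j = j₀ ∧ k ≤ i₀.castSucc then 1 else 0) - γ j
  refine notMem_extremePoints_of_perturbation hT.1 hpos (ρ := ρ) (fun k => ?_) (fun j i => ?_) ?_ hT
  · have hγk : ∑ j, γ j * T k j = if k ≤ i₀.castSucc then T k j₀ else 0 := by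
      simpa [Finset.sum_apply] using congrFun hγ k
    simp [ρ, sub_mul, Finset.sum_sub_distrib, hγk, ite_and]
  · by_cases hj : j = j₀
    · subst hj
      by_cases hi : i = i₀
      · exact Or.inr (hi ▸ hslack)
      · have hle : i.castSucc ≤ i₀.castSucc ↔ i.succ ≤ i₀.castSucc := by
          have := Fin.val_ne_of_ne hi
          simp only [Fin.le_def, Fin.val_castSucc, Fin.val_succ]
          omega
        simp [ρ, hle]
    · simp [ρ, hj]
  · intro h
    have h₀ := congrFun (congrFun h 0) j₀
    have hl := congrFun (congrFun h (Fin.last n)) j₀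
    -- `ρ 0 j₀ - ρ (last n) j₀ = 1`
    simp [ρ, not_le.2 (Fin.castSucc_lt_last i₀)] at h₀ hl
    simp [hl] at h₀

theorem mem_extremePoints_of_isTightAt {T : Matrix (Fin (n+1)) ι ℝ}
    (hT : T ∈ privateMechanisms ε n ι) (hpos : ∀ i j, 0 < T i j)
    (hli : LinearIndependent ℝ fun j i => T i j)
    (htight : ∀ j i, IsTightAt ε (fun k => T k j) i) :
    T ∈ (privateMechanisms ε n ι).extremePoints ℝ := by
  refine mem_extremePoints_iff_left.2 ⟨hT, fun Y hY Z hZ ⟨a, b, ha, hb, _, hab⟩ => ?_⟩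
  have hcol : ∀ j, (fun k => T k j) = a • (fun k => Y k j) + b • (fun k => Z k j) := fun j => by
    funext k
    simp [← hab]
  have hμ : ∀ k j, Y k j = (Y (Fin.last n) j / T (Fin.last n) j) * T k j := fun k j =>
    congrFun (eq_smul_of_forall_ratio (t := fun k => T k j) (y := fun k => Y k j)
      (hpos _ j).ne' fun i =>
        (hY.2.2 j).exists_common_ratio ha hb (hZ.2.2 j) (hcol j) (htight j i)) k
  exact eq_of_forall_eq_mul_of_linearIndependent hli (by simp [hY.2.1, hT.2.1]) hμ

end Mechanisms

theorem stmt6_general (ε : ℝ) (n : ℕ)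
    (U : Set (Matrix (Fin (n+1)) (Fin (n+1)) ℝ))
    (hU : U = {T | (∀ i j, 0 ≤ T i j) ∧ (∀ i, ∑ j, T i j = 1) ∧
      ∀ j, NeighborIndist ε n (fun i => T i j)})
    (T : Matrix (Fin (n+1)) (Fin (n+1)) ℝ) (hT : T ∈ U) (hpos : ∀ i j, 0 < T i j) :
    T ∈ U.extremePoints ℝ ↔
      (LinearIndependent ℝ (fun j : Fin (n+1) => fun i => T i j)) ∧
      ∀ j, ∃ (c : ℝ) (s : Fin (n+1) → ℝ), 0 < c ∧ IsScale ε n s ∧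
        (fun i => T i j) = c • s := by
  have hU' : U = privateMechanisms ε n (Fin (n+1)) := hU
  subst hU'
  constructor
  · intro hext
    have hli := linearIndependent_of_mem_extremePoints hpos hext
    have hspan := hli.span_eq_top_of_card_eq_finrank (by simp)
    exact ⟨hli, fun j => exists_smul_isScale (fun k => hpos k j)
      fun i => isTightAt_of_mem_extremePoints hpos hspan hext j i⟩
  · rintro ⟨hli, hscale⟩
    refine mem_extremePoints_of_isTightAt hT hpos hli fun j i => ?_
    obtain ⟨c, s, -, hs, hcol⟩ := hscale j
    rw [hcol]
    exact IsTightAt.smul (v := s) (hs.2.2 i) c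

/-- For T in the polytope U of ε-differentially private count mechanisms with all
entries strictly positive, T is an extreme point of U iff its columns are linearly
independent positive multiples of ε-scales. -/
theorem stmt6 (ε : ℝ) (hε : 0 < ε) (n : ℕ)
    (U : Set (Matrix (Fin (n+1)) (Fin (n+1)) ℝ))
    (hU : U = {T | (∀ i j, 0 ≤ T i j) ∧ (∀ i, ∑ j, T i j = 1) ∧
      ∀ j, NeighborIndist ε n (fun i => T i j)})
    (T : Matrix (Fin (n+1)) (Fin (n+1)) ℝ) (hT : T ∈ U) (hpos : ∀ i j, 0 < T i j) :
    T ∈ U.extremePoints ℝ ↔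
      (LinearIndependent ℝ (fun j : Fin (n+1) => fun i => T i j)) ∧
      ∀ j, ∃ (c : ℝ) (s : Fin (n+1) → ℝ), 0 < c ∧ IsScale ε n s ∧
        (fun i => T i j) = c • s :=
  stmt6_general ε n U hU T hT hpos
end

section
/- Let Ψ be the n × k matrix whose columns are the k = 2^{n-1} ε-scales, and let R_U = {B ∈ ℝ^{k×n} : B has nonnegative entries and ΨB𝟙_n = 𝟙_n}. Then the map B ↦ ΨB is a surjection from R_U onto U, the set of ε-differentially private count mechanisms. -/
open Finset

section

variable {n : ℕ}

lemma IsScale.neighborIndist {ε : ℝ} (hε : 0 ≤ ε) {s : Fin (n+1) → ℝ} (hs : IsScale ε n s) :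
    NeighborIndist ε n s := by
  have hexp : Real.exp (-ε) ≤ Real.exp ε := Real.exp_le_exp.2 (by linarith)
  intro i
  have hsucc := hs.1 i.succ
  rcases hs.2.2 i with h | h <;> rw [h] <;> constructor <;> nlinarith

lemma NeighborIndist.sum_mul {ε : ℝ} {κ : Type*} [Fintype κ] {f : κ → Fin (n+1) → ℝ}
    (hf : ∀ c, NeighborIndist ε n (f c)) {w : κ → ℝ} (hw : ∀ c, 0 ≤ w c) :
    NeighborIndist ε n (fun i => ∑ c, f c i * w c) := by
  intro i
  simp only [mul_sum]
  constructor <;> refine sum_le_sum fun c _ => ?_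
  · nlinarith [(hf c i).1, hw c]
  · nlinarith [(hf c i).2, hw c]

def tailProd (r : Fin n → ℝ) (i : Fin (n+1)) : ℝ :=
  ∏ l : Fin n, if (i : ℕ) ≤ l then r l else 1

lemma tailProd_last (r : Fin n → ℝ) : tailProd r (Fin.last n) = 1 :=
  prod_eq_one fun l _ => if_neg (by simp)

lemma tailProd_castSucc (r : Fin n → ℝ) (i : Fin n) :
    tailProd r i.castSucc = r i * tailProd r i.succ := by
  unfold tailProd
  rw [Fintype.prod_eq_mul_prod_compl i, Fintype.prod_eq_mul_prod_compl i]
  simp only [Fin.val_castSucc, Fin.val_succ, le_refl, if_true, Nat.not_succ_le_self, if_false,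
    one_mul]
  refine congrArg _ (prod_congr rfl fun l hl => ?_)
  have : (i : ℕ) ≠ l := fun h => by simp [Fin.ext h] at hl
  simp only [Nat.succ_le_iff, lt_iff_le_and_ne, this, ne_eq, not_false_eq_true, and_true]

lemma tailProd_pos {r : Fin n → ℝ} (hr : ∀ l, 0 < r l) (i : Fin (n+1)) : 0 < tailProd r i :=
  prod_pos fun l _ => by split_ifs <;> simp [hr]

lemma mul_tailProd_div_succ {v : Fin (n+1) → ℝ} (hv : ∀ i, 0 < v i) (i : Fin (n+1)) :
    v (Fin.last n) * tailProd (fun l => v l.castSucc / v l.succ) i = v i := by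
  induction i using Fin.reverseInduction with
  | last => rw [tailProd_last, mul_one]
  | cast i ih =>
    rw [tailProd_castSucc, mul_left_comm, ih, div_mul_cancel₀ _ (hv i.succ).ne']

lemma tailProd_sum_mul {β : Type*} [Fintype β] (p g : Fin n → β → ℝ) (hp : ∀ l, ∑ b, p l b = 1)
    (i : Fin (n+1)) :
    tailProd (fun l => ∑ b, p l b * g l b) i
      = ∑ σ : Fin n → β, (∏ l, p l (σ l)) * tailProd (fun l => g l (σ l)) i := by
  have factor (l : Fin n) : (if (i : ℕ) ≤ l then ∑ b, p l b * g l b else 1)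
      = ∑ b, p l b * if (i : ℕ) ≤ l then g l b else 1 := by
    split_ifs <;> simp [hp]
  simp only [tailProd, factor, Fintype.prod_sum, prod_mul_distrib]

noncomputable def expSign (ε : ℝ) (b : Bool) : ℝ := if b then Real.exp ε else Real.exp (-ε)

lemma expSign_pos (ε : ℝ) (b : Bool) : 0 < expSign ε b := by
  cases b <;> exact Real.exp_pos _

noncomputable def signScale (ε : ℝ) (σ : Fin n → Bool) (i : Fin (n+1)) : ℝ :=
  tailProd (fun l => expSign ε (σ l)) i / ∑ j, tailProd (fun l => expSign ε (σ l)) j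

lemma sum_tailProd_expSign_pos (ε : ℝ) (σ : Fin n → Bool) :
    0 < ∑ j, tailProd (fun l => expSign ε (σ l)) j :=
  sum_pos (fun j _ => tailProd_pos (fun l => expSign_pos ε (σ l)) j) univ_nonempty

lemma isScale_signScale (ε : ℝ) (σ : Fin n → Bool) : IsScale ε n (signScale ε σ) := by
  have hS := sum_tailProd_expSign_pos ε σ
  refine ⟨fun i => div_nonneg (tailProd_pos (fun l => expSign_pos ε (σ l)) i).le hS.le,
    by simp only [signScale, ← sum_div]; exact div_self hS.ne', ?_⟩
  intro i
  simp only [signScale, tailProd_castSucc, mul_div_assoc]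
  cases σ i
  · exact Or.inr rfl
  · exact Or.inl rfl

lemma NeighborIndist.eq_zero_or_pos {ε : ℝ} {v : Fin (n+1) → ℝ} (hv : NeighborIndist ε n v)
    (hv0 : ∀ i, 0 ≤ v i) : v = 0 ∨ ∀ i, 0 < v i := by
  rcases (hv0 (Fin.last n)).eq_or_lt with hlast | hlast
  · left
    funext i
    induction i using Fin.reverseInduction with
    | last => exact hlast.symm
    | cast i ih => exact le_antisymm (by simpa [ih] using (hv i).2) (hv0 _)
  · right
    intro i
    induction i using Fin.reverseInduction with
    | last => exact hlast
    | cast i ih => exact lt_of_lt_of_le (mul_pos (Real.exp_pos _) ih) (hv i).1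

lemma NeighborIndist.exists_nonneg_sum_signScale {ε : ℝ} (hε : 0 ≤ ε) {v : Fin (n+1) → ℝ}
    (hv : NeighborIndist ε n v) (hv0 : ∀ i, 0 ≤ v i) :
    ∃ w : (Fin n → Bool) → ℝ, (∀ σ, 0 ≤ w σ) ∧ ∀ i, ∑ σ, w σ * signScale ε σ i = v i := by
  rcases hv.eq_zero_or_pos hv0 with rfl | hpos
  · exact ⟨0, fun _ => le_rfl, fun _ => by simp⟩
  have hratio (l : Fin n) :
      v l.castSucc / v l.succ ∈ segment ℝ (Real.exp ε) (Real.exp (-ε)) := by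
    rw [segment_symm, segment_eq_Icc (Real.exp_le_exp.2 (by linarith))]
    constructor
    · rw [le_div_iff₀ (hpos _)]; exact (hv l).1
    · rw [div_le_iff₀ (hpos _)]; exact (hv l).2
  choose a b ha hb hab hcomb using hratio
  let p : Fin n → Bool → ℝ := fun l c => if c then a l else b l
  have hp0 (l : Fin n) (c : Bool) : 0 ≤ p l c := by cases c <;> simp [p, ha, hb]
  have hp1 (l : Fin n) : ∑ c, p l c = 1 := by simp [p, hab]
  have hratio_eq (l : Fin n) : ∑ c, p l c * expSign ε c = v l.castSucc / v l.succ := by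
    rw [← hcomb l]; simp [p, expSign]
  refine ⟨fun σ => v (Fin.last n) * (∏ l, p l (σ l)) * ∑ j, tailProd (fun l => expSign ε (σ l)) j,
    fun σ => ?_, fun i => ?_⟩
  · exact mul_nonneg (mul_nonneg (hpos _).le (prod_nonneg fun l _ => hp0 l _))
      (sum_tailProd_expSign_pos ε σ).le
  calc ∑ σ, v (Fin.last n) * (∏ l, p l (σ l)) * (∑ j, tailProd (fun l => expSign ε (σ l)) j)
        * signScale ε σ i
      = v (Fin.last n) *
          ∑ σ : Fin n → Bool, (∏ l, p l (σ l)) * tailProd (fun l => expSign ε (σ l)) i := by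
        rw [mul_sum]
        refine sum_congr rfl fun σ _ => ?_
        rw [signScale, mul_assoc _ (∑ j, _), mul_div_cancel₀ _ (sum_tailProd_expSign_pos ε σ).ne',
          mul_assoc]
    _ = v (Fin.last n) * tailProd (fun l => v l.castSucc / v l.succ) i := by
        rw [← tailProd_sum_mul _ _ hp1]; simp only [hratio_eq]
    _ = v i := mul_tailProd_div_succ hpos i

lemma Matrix.exists_nonneg_mul_eq_sum_mul_col {m κ p ι : Type*} [Fintype κ] [DecidableEq κ]
    [Fintype ι] (Ψ : Matrix m κ ℝ) (col : ι → κ) {w : p → ι → ℝ} (hw : ∀ j σ, 0 ≤ w j σ) :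
    ∃ B : Matrix κ p ℝ, (∀ c j, 0 ≤ B c j) ∧ ∀ i j, (Ψ * B) i j = ∑ σ, w j σ * Ψ i (col σ) := by
  refine ⟨Matrix.of fun c j => ∑ σ, if col σ = c then w j σ else 0,
    fun c j => sum_nonneg fun σ _ => ?_, fun i j => ?_⟩
  · split_ifs
    exacts [hw j σ, le_rfl]
  · simp only [Matrix.mul_apply, Matrix.of_apply, mul_sum, mul_ite, mul_zero]
    rw [sum_comm]
    simp [mul_comm]

end

theorem stmt7_general (ε : ℝ) (hε : 0 < ε) (n : ℕ)
    (Ψ : Matrix (Fin (n+1)) (Fin (2 ^ n)) ℝ)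
    (hcols : ∀ c, IsScale ε n (fun i => Ψ i c))
    (hsurj : ∀ s, IsScale ε n s → ∃ c, (fun i => Ψ i c) = s) :
    (fun B : Matrix (Fin (2 ^ n)) (Fin (n+1)) ℝ => Ψ * B) ''
        {B | (∀ i j, 0 ≤ B i j) ∧ (Ψ * B).mulVec (fun _ => (1:ℝ)) = fun _ => 1}
      = {T | (∀ i j, 0 ≤ T i j) ∧ (∀ i, ∑ j, T i j = 1) ∧
          ∀ j, NeighborIndist ε n (fun i => T i j)} := by
  ext T
  constructor
  · rintro ⟨B, ⟨hB, hB1⟩, rfl⟩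
    dsimp only
    refine ⟨fun i j => by
        rw [Matrix.mul_apply]; exact sum_nonneg fun c _ => mul_nonneg ((hcols c).1 i) (hB c j),
      fun i => by simpa [Matrix.mulVec, dotProduct] using congrFun hB1 i,
      fun j => NeighborIndist.sum_mul (fun c => (hcols c).neighborIndist hε.le) (hB · j)⟩
  · rintro ⟨hT, hT1, hTind⟩
    choose w hw0 hw using fun j => (hTind j).exists_nonneg_sum_signScale hε.le (hT · j)
    choose col hcol using fun σ => hsurj _ (isScale_signScale ε σ)
    obtain ⟨B, hB0, hB⟩ := Ψ.exists_nonneg_mul_eq_sum_mul_col col hw0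
    have hΨB : Ψ * B = T := by
      ext i j
      rw [hB, ← hw j i]
      exact sum_congr rfl fun σ _ => by rw [← congrFun (hcol σ) i]
    refine ⟨B, ⟨hB0, ?_⟩, hΨB⟩
    ext i
    simp [hΨB, Matrix.mulVec, dotProduct, hT1 i]

/-- With Ψ the matrix whose columns enumerate the 2 ^ n ε-scales, the map B ↦ ΨB is a
surjection from the unfixed representation polytope R_U onto U. -/
theorem stmt7 (ε : ℝ) (hε : 0 < ε) (n : ℕ)
    (Ψ : Matrix (Fin (n+1)) (Fin (2 ^ n)) ℝ)
    (hcols : ∀ c, IsScale ε n (fun i => Ψ i c))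
    (hinj : Function.Injective (fun c => fun i => Ψ i c))
    (hsurj : ∀ s, IsScale ε n s → ∃ c, (fun i => Ψ i c) = s) :
    (fun B : Matrix (Fin (2 ^ n)) (Fin (n+1)) ℝ => Ψ * B) ''
        {B | (∀ i j, 0 ≤ B i j) ∧ (Ψ * B).mulVec (fun _ => (1:ℝ)) = fun _ => 1}
      = {T | (∀ i j, 0 ≤ T i j) ∧ (∀ i, ∑ j, T i j = 1) ∧
          ∀ j, NeighborIndist ε n (fun i => T i j)} :=
  stmt7_general ε hε n Ψ hcols hsurj
end

section
/- Let z ∈ ℝ^n be a probability row vector with set of positive indices 𝒫, and let B be an extreme point of the fixed-point representation polytope R_F = {B ∈ ℝ^{k×n} : B ≥ 0, ΨB𝟙_n = 𝟙_n, zΨB = z}, where Ψ is the n × k matrix of ε-scales with k = 2^{n-1}. Then the number of strictly positive entries of B is at least |𝒫| and at most |𝒫| + n − 1. -/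
open Finset Filter Topology Matrix Module

theorem IsScale.pos {ε : ℝ} {n : ℕ} {s : Fin (n+1) → ℝ} (hs : IsScale ε n s) (i : Fin (n+1)) :
    0 < s i := by
  obtain ⟨-, hsum, hstep⟩ := hs
  have hsucc (i : Fin n) : 0 < s i.succ ↔ 0 < s i.castSucc := by
    rcases hstep i with h | h <;> rw [h, mul_pos_iff_of_pos_left (Real.exp_pos _)]
  have hzero (i : Fin (n+1)) : 0 < s i ↔ 0 < s 0 := by
    induction i using Fin.induction with
    | zero => rfl
    | succ i ih => exact (hsucc i).trans ih
  obtain ⟨j, -, hj⟩ := exists_lt_of_sum_lt (s := univ) (f := fun _ => (0 : ℝ)) (g := s)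
    (by simp [hsum])
  exact (hzero i).2 ((hzero j).1 hj)

theorem eq_of_sum_eq_of_forall_ne {ι M : Type*} [Fintype ι] [AddCommGroup M] {f g : ι → M}
    (j₀ : ι) (hsum : ∑ j, f j = ∑ j, g j) (hne : ∀ j ≠ j₀, f j = g j) : f = g := by
  classical
  funext j
  obtain rfl | hj := eq_or_ne j j₀
  · have hrest : ∑ i ∈ univ.erase j, f i = ∑ i ∈ univ.erase j, g i :=
      sum_congr rfl fun i hi => hne i (ne_of_mem_erase hi)
    rw [← add_sum_erase _ _ (mem_univ j), ← add_sum_erase _ _ (mem_univ j), hrest] at hsum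
    exact add_right_cancel hsum
  · exact hne j hj

theorem eq_zero_of_add_mem_of_sub_mem_of_mem_extremePoints {E : Type*} [AddCommGroup E]
    [Module ℝ E] {K : Set E} {x d : E} (hx : x ∈ K.extremePoints ℝ) (hadd : x + d ∈ K)
    (hsub : x - d ∈ K) : d = 0 :=
  add_eq_left.1 (hx.2 hadd hsub (mem_openSegment_add_sub x d))

namespace Matrix

variable {m n : Type*} [Fintype m] [Fintype n]

theorem eventually_nonneg_add_smul {B D : Matrix m n ℝ} (hB : ∀ i j, 0 ≤ B i j)
    (hD : ∀ i j, B i j = 0 → D i j = 0) : ∀ᶠ t in 𝓝 (0 : ℝ), ∀ i j, 0 ≤ (B + t • D) i j := by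
  simp only [eventually_all, add_apply, smul_apply, smul_eq_mul]
  intro i j
  obtain hBij | hBij := (hB i j).eq_or_lt
  · simp [← hBij, hD i j hBij.symm]
  · have hlim : Tendsto (fun t : ℝ => B i j + t * D i j) (𝓝 0) (𝓝 (B i j)) := by
      simpa using (by fun_prop : Continuous fun t : ℝ => B i j + t * D i j).tendsto 0
    exact (hlim.eventually_const_lt hBij).mono fun _ => le_of_lt

variable {V : Type*} [AddCommGroup V] [Module ℝ V]

theorem eq_zero_of_map_eq_zero_of_mem_extremePoints {K : Set (Matrix m n ℝ)} {B D : Matrix m n ℝ}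
    (hB : B ∈ K.extremePoints ℝ) (hB0 : ∀ i j, 0 ≤ B i j) (L : Matrix m n ℝ →ₗ[ℝ] V)
    (hK : ∀ Y : Matrix m n ℝ, (∀ i j, 0 ≤ Y i j) → (∀ i j, B i j = 0 → Y i j = 0) →
      L Y = L B → Y ∈ K)
    (hLD : L D = 0) (hD : ∀ i j, B i j = 0 → D i j = 0) : D = 0 := by
  have hnonneg := eventually_nonneg_add_smul hB0 hD
  have hboth : ∀ᶠ t in 𝓝[>] (0 : ℝ), 0 < t ∧ (∀ i j, 0 ≤ (B + t • D) i j) ∧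
      ∀ i j, 0 ≤ (B + (-t) • D) i j :=
    eventually_mem_nhdsWithin.and <| nhdsWithin_le_nhds <|
      hnonneg.and ((continuous_neg.tendsto' 0 0 neg_zero).eventually hnonneg)
  obtain ⟨t, ht, hplus, hminus⟩ := hboth.exists
  have hmem (s : ℝ) (hs : ∀ i j, 0 ≤ (B + s • D) i j) : B + s • D ∈ K :=
    hK _ hs (fun i j hij => by simp [hij, hD i j hij]) (by simp [hLD])
  have htD : t • D = 0 := eq_zero_of_add_mem_of_sub_mem_of_mem_extremePoints hB
    (hmem t hplus) (by simpa [neg_smul, ← sub_eq_add_neg] using hmem (-t) hminus)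
  exact (smul_eq_zero.1 htD).resolve_left ht.ne'

theorem card_pos_entries_le_finrank_of_mem_extremePoints [FiniteDimensional ℝ V]
    {K : Set (Matrix m n ℝ)} {B : Matrix m n ℝ}
    (hB : B ∈ K.extremePoints ℝ) (hB0 : ∀ i j, 0 ≤ B i j) (L : Matrix m n ℝ →ₗ[ℝ] V)
    (hK : ∀ Y : Matrix m n ℝ, (∀ i j, 0 ≤ Y i j) → (∀ i j, B i j = 0 → Y i j = 0) →
      L Y = L B → Y ∈ K) :
    #{p : m × n | 0 < B p.1 p.2} ≤ finrank ℝ V := by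
  classical
  set S := ({p : m × n | 0 < B p.1 p.2} : Finset (m × n))
  let extend : (S → ℝ) →ₗ[ℝ] Matrix m n ℝ :=
    { toFun g := of fun i j => if h : (i, j) ∈ S then g ⟨(i, j), h⟩ else 0
      map_add' g g' := by ext i j; by_cases h : (i, j) ∈ S <;> simp [h]
      map_smul' c g := by ext i j; by_cases h : (i, j) ∈ S <;> simp [h] }
  have hinj : Function.Injective (L ∘ₗ extend) := by
    refine (injective_iff_map_eq_zero _).2 fun g hg => ?_
    have hzero := eq_zero_of_map_eq_zero_of_mem_extremePoints hB hB0 L hK hg fun i j hij => by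
      simp [extend, S, hij]
    funext ⟨⟨i, j⟩, hp⟩
    simpa [extend, hp] using congr_fun₂ hzero i j
  simpa using LinearMap.finrank_le_finrank_of_injective hinj

end Matrix

theorem Matrix.vecMul_pos_of_pos {m k : Type*} [Fintype m] {Ψ : Matrix m k ℝ} {z : m → ℝ}
    (hz0 : ∀ i, 0 ≤ z i) {i₀ : m} (hi₀ : 0 < z i₀) (hΨ : ∀ i c, 0 < Ψ i c) (c : k) :
    0 < vecMul z Ψ c :=
  sum_pos' (fun i _ => mul_nonneg (hz0 i) (hΨ i c).le) ⟨i₀, mem_univ _, mul_pos hi₀ (hΨ i₀ c)⟩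

theorem Matrix.vecMul_pos_iff_exists_pos {m k : Type*} [Fintype k] {w : k → ℝ}
    (hw : ∀ c, 0 < w c) {Y : Matrix k m ℝ} (hY : ∀ c j, 0 ≤ Y c j) (j : m) :
    0 < vecMul w Y j ↔ ∃ c, 0 < Y c j := by
  simp only [vecMul, dotProduct]
  rw [sum_pos_iff_of_nonneg fun c _ => mul_nonneg (hw c).le (hY c j)]
  simp [mul_pos_iff_of_pos_left (hw _)]

theorem Matrix.sum_vecMul_eq_sum_of_mulVec_one {R m n : Type*} [CommSemiring R] [Fintype m]
    [Fintype n] {A : Matrix m n R} (hA : A.mulVec (fun _ => (1 : R)) = (fun _ => 1)) (v : m → R) :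
    ∑ j, vecMul v A j = ∑ i, v i := by
  rw [← dotProduct_one, ← dotProduct_one v, ← dotProduct_mulVec]
  exact congr_arg _ hA

theorem Matrix.vecMul_apply_eq_zero {R m n : Type*} [NonUnitalNonAssocSemiring R] [Fintype m]
    {Y : Matrix m n R} {j : n} (hY : ∀ c, Y c j = 0) (v : m → R) : vecMul v Y j = 0 := by
  simp [vecMul, dotProduct, hY]

section FixedPointPolytope

variable {m k : Type*} [Fintype m] [Fintype k]

def fixedPointPolytope (Ψ : Matrix m k ℝ) (z : m → ℝ) : Set (Matrix k m ℝ) :=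
  {B | (∀ i j, 0 ≤ B i j) ∧
    (Ψ * B).mulVec (fun _ => (1:ℝ)) = (fun _ => 1) ∧
    Matrix.vecMul z (Ψ * B) = z}

variable {Ψ : Matrix m k ℝ} {z : m → ℝ} {B Y : Matrix k m ℝ}

namespace fixedPointPolytope

theorem pos_iff_exists_pos (hw : ∀ c, 0 < vecMul z Ψ c) (hB : B ∈ fixedPointPolytope Ψ z)
    (j : m) : 0 < z j ↔ ∃ c, 0 < B c j := by
  obtain ⟨hB0, -, hBz⟩ := hB
  rw [← vecMul_vecMul] at hBz
  rw [← vecMul_pos_iff_exists_pos hw hB0, hBz]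

theorem eq_zero_of_not_pos (hw : ∀ c, 0 < vecMul z Ψ c) (hB : B ∈ fixedPointPolytope Ψ z)
    {j : m} (hj : ¬ 0 < z j) (c : k) : B c j = 0 :=
  (hB.1 c j).antisymm' (not_lt.1 fun h => hj ((pos_iff_exists_pos hw hB j).2 ⟨c, h⟩))

theorem card_pos_le_card_pos_entries (hw : ∀ c, 0 < vecMul z Ψ c)
    (hB : B ∈ fixedPointPolytope Ψ z) : #{j | 0 < z j} ≤ #{p : k × m | 0 < B p.1 p.2} := by
  classical
  calc #{j | 0 < z j} ≤ #(({p : k × m | 0 < B p.1 p.2} : Finset _).image Prod.snd) := by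
        refine card_le_card fun j hj => ?_
        obtain ⟨c, hc⟩ := (pos_iff_exists_pos hw hB j).1 (by simpa using hj)
        exact mem_image.2 ⟨(c, j), by simpa using hc, rfl⟩
    _ ≤ #{p : k × m | 0 < B p.1 p.2} := card_image_le

theorem mem_of_support_subset (hw : ∀ c, 0 < vecMul z Ψ c) (hB : B ∈ fixedPointPolytope Ψ z)
    {j₀ : m} (hY0 : ∀ c j, 0 ≤ Y c j) (hYB : ∀ c j, B c j = 0 → Y c j = 0)
    (hrow : (Ψ * Y).mulVec (fun _ => (1:ℝ)) = (fun _ => 1))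
    (hcol : ∀ j ≠ j₀, 0 < z j → vecMul z (Ψ * Y) j = z j) :
    Y ∈ fixedPointPolytope Ψ z := by
  refine ⟨hY0, hrow, eq_of_sum_eq_of_forall_ne j₀ (sum_vecMul_eq_sum_of_mulVec_one hrow z)
    fun j hj => ?_⟩
  by_cases hzj : 0 < z j
  · exact hcol j hj hzj
  have hBj := eq_zero_of_not_pos hw hB hzj
  have hz : z j = 0 := by rw [← congr_fun hB.2.2 j, ← vecMul_vecMul, vecMul_apply_eq_zero hBj]
  rw [hz, ← vecMul_vecMul, vecMul_apply_eq_zero fun c => hYB c j (hBj c)]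

theorem card_pos_entries_add_one_le (hw : ∀ c, 0 < vecMul z Ψ c)
    (hB : B ∈ (fixedPointPolytope Ψ z).extremePoints ℝ) {j₀ : m} (hj₀ : 0 < z j₀) :
    #{p : k × m | 0 < B p.1 p.2} + 1 ≤ #{j | 0 < z j} + Fintype.card m := by
  classical
  set P : Finset m := {j | 0 < z j}
  let L : Matrix k m ℝ →ₗ[ℝ] (m → ℝ) × (P.erase j₀ → ℝ) :=
    { toFun Y := ((Ψ * Y).mulVec (fun _ => 1), fun j => vecMul z (Ψ * Y) j)
      map_add' Y Y' := by ext <;> simp [Matrix.mul_add, add_mulVec, vecMul_add]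
      map_smul' c Y := by ext <;> simp [Matrix.mul_smul, smul_mulVec, vecMul_smul] }
  have hK (Y : Matrix k m ℝ) (hY0 : ∀ c j, 0 ≤ Y c j) (hYB : ∀ c j, B c j = 0 → Y c j = 0)
      (hLY : L Y = L B) : Y ∈ fixedPointPolytope Ψ z := by
    refine mem_of_support_subset (j₀ := j₀) hw hB.1 hY0 hYB
      ((congr_arg Prod.fst hLY).trans hB.1.2.1) fun j hj hzj => ?_
    have hj' : j ∈ P.erase j₀ := mem_erase.2 ⟨hj, by simpa [P] using hzj⟩
    exact (congr_fun (congr_arg Prod.snd hLY) ⟨j, hj'⟩).trans (congr_fun hB.1.2.2 j)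
  have hcard := Matrix.card_pos_entries_le_finrank_of_mem_extremePoints hB hB.1.1 L hK
  have hP : j₀ ∈ P := by simpa [P] using hj₀
  rw [finrank_prod, finrank_fintype_fun_eq_card, finrank_fintype_fun_eq_card,
    Fintype.card_coe, card_erase_of_mem hP] at hcard
  have := card_pos.2 ⟨j₀, hP⟩
  omega

end fixedPointPolytope

end FixedPointPolytope

theorem stmt14_general (ε : ℝ) (n : ℕ)
    (z : Fin (n+1) → ℝ) (hz0 : ∀ i, 0 ≤ z i) (hz1 : ∑ i, z i = 1)
    (Ψ : Matrix (Fin (n+1)) (Fin (2 ^ n)) ℝ)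
    (hcols : ∀ c, IsScale ε n (fun i => Ψ i c))
    (RF : Set (Matrix (Fin (2 ^ n)) (Fin (n+1)) ℝ))
    (hRF : RF = {B | (∀ i j, 0 ≤ B i j) ∧
      (Ψ * B).mulVec (fun _ => (1:ℝ)) = (fun _ => 1) ∧
      Matrix.vecMul z (Ψ * B) = z})
    (B : Matrix (Fin (2 ^ n)) (Fin (n+1)) ℝ) (hB : B ∈ RF.extremePoints ℝ) :
    (Finset.univ.filter fun i => 0 < z i).card ≤
        (Finset.univ.filter fun p : Fin (2 ^ n) × Fin (n+1) => 0 < B p.1 p.2).card ∧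
    (Finset.univ.filter fun p : Fin (2 ^ n) × Fin (n+1) => 0 < B p.1 p.2).card ≤
        (Finset.univ.filter fun i => 0 < z i).card + n := by
  change RF = fixedPointPolytope Ψ z at hRF
  subst hRF
  obtain ⟨j₀, -, hj₀⟩ := exists_lt_of_sum_lt (s := univ) (f := fun _ => (0 : ℝ)) (g := z)
    (by simp [hz1])
  have hw := vecMul_pos_of_pos hz0 hj₀ fun i c => (hcols c).pos i
  refine ⟨fixedPointPolytope.card_pos_le_card_pos_entries hw hB.1, ?_⟩
  have hupper := fixedPointPolytope.card_pos_entries_add_one_le hw hB hj₀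
  rw [Fintype.card_fin] at hupper
  omega

/-- Every extreme point of the fixed-point representation polytope R_F has a number of
strictly positive entries between |𝒫| and |𝒫| + n − 1, where 𝒫 is the set of indices
where z is positive (here dimension is n+1, so the upper bound is |𝒫| + n). -/
theorem stmt14 (ε : ℝ) (hε : 0 < ε) (n : ℕ)
    (z : Fin (n+1) → ℝ) (hz0 : ∀ i, 0 ≤ z i) (hz1 : ∑ i, z i = 1)
    (Ψ : Matrix (Fin (n+1)) (Fin (2 ^ n)) ℝ)
    (hcols : ∀ c, IsScale ε n (fun i => Ψ i c))
    (hinj : Function.Injective (fun c => fun i => Ψ i c))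
    (hsurj : ∀ s, IsScale ε n s → ∃ c, (fun i => Ψ i c) = s)
    (RF : Set (Matrix (Fin (2 ^ n)) (Fin (n+1)) ℝ))
    (hRF : RF = {B | (∀ i j, 0 ≤ B i j) ∧
      (Ψ * B).mulVec (fun _ => (1:ℝ)) = (fun _ => 1) ∧
      Matrix.vecMul z (Ψ * B) = z})
    (B : Matrix (Fin (2 ^ n)) (Fin (n+1)) ℝ) (hB : B ∈ RF.extremePoints ℝ) :
    (Finset.univ.filter fun i => 0 < z i).card ≤
        (Finset.univ.filter fun p : Fin (2 ^ n) × Fin (n+1) => 0 < B p.1 p.2).card ∧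
    (Finset.univ.filter fun p : Fin (2 ^ n) × Fin (n+1) => 0 < B p.1 p.2).card ≤
        (Finset.univ.filter fun i => 0 < z i).card + n :=
  stmt14_general ε n z hz0 hz1 Ψ hcols RF hRF B hB
end

section
/- The n single-peaked ε-scales are linearly independent. That is, letting σ^{(l)} for l ∈ {0,...,n-1} be the ε-scale satisfying σ^{(l)}_i = e^ε σ^{(l)}_{i+1} for i ≥ l and σ^{(l)}_i = e^{-ε} σ^{(l)}_{i+1} for i < l (increasing up to a peak at position l, then decreasing), the vectors σ^{(0)},...,σ^{(n-1)} form a basis of ℝ^n. -/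
/-!
Apply the linear map `v ↦ (v 0, v 0 - e^ε v 1, …, v (n-1) - e^ε v n)`. For the scale peaked
at `m`, the relation `v i = e^ε v (i+1)` holds for every `i ≥ m`, so the image vanishes in all
coordinates after `m`, while in coordinate `m` it is `(e^{-ε} - e^ε) v m ≠ 0` (or `v 0 ≠ 0`
when `m = 0`). The images thus form an upper triangular matrix with nonzero diagonal, and
`n + 1` independent vectors in `ℝ^{n+1}` span.
-/

theorem IsScale.apply_ne_zero {ε : ℝ} {n : ℕ} {s : Fin (n+1) → ℝ} (hs : IsScale ε n s)
    (l : Fin (n+1)) : s l ≠ 0 := by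
  have hstep (i : Fin n) : s i.castSucc = 0 ↔ s i.succ = 0 := by
    rcases hs.2.2 i with h | h <;> simp [h, Real.exp_ne_zero]
  have hzero (j : Fin (n+1)) : s j = 0 ↔ s 0 = 0 := by
    induction j using Fin.induction with
    | zero => rfl
    | succ i ih => rw [← hstep i, ih]
  intro hl
  have : ∑ j, s j = 0 := Finset.sum_eq_zero fun j _ => (hzero j).2 ((hzero l).1 hl)
  exact one_ne_zero (hs.2.1.symm.trans this)

theorem linearIndependent_of_upperTriangular {K ι : Type*} [Field K] [Fintype ι]
    [LinearOrder ι]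
    {v : ι → ι → K} (hzero : ∀ ⦃j m⦄, m < j → v m j = 0) (hdiag : ∀ j, v j j ≠ 0) :
    LinearIndependent K v := by
  classical
  let A : Matrix ι ι K := Matrix.of fun j m => v m j
  have hA : A.IsUpperTriangular := fun j m hmj => hzero hmj
  change LinearIndependent K A.col
  rw [Matrix.linearIndependent_cols_iff_isUnit, Matrix.isUnit_iff_isUnit_det,
    Matrix.det_of_isUpperTriangular hA, isUnit_iff_ne_zero]
  exact Finset.prod_ne_zero_iff.2 fun j _ => hdiag j

section DescentDefect

variable {R : Type*} [CommRing R] (c : R) (n : ℕ)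

def descentDefect : (Fin (n+1) → R) →ₗ[R] Fin (n+1) → R where
  toFun v := Fin.cons (v 0) fun i => v i.castSucc - c * v i.succ
  map_add' v w := by
    ext j
    cases j using Fin.cases <;> simp only [Pi.add_apply, Fin.cons_zero, Fin.cons_succ]
    ring
  map_smul' a v := by
    ext j
    cases j using Fin.cases <;>
      simp only [Pi.smul_apply, smul_eq_mul, Fin.cons_zero, Fin.cons_succ, RingHom.id_apply]
    ring

variable {c n}

@[simp] theorem descentDefect_apply_succ (v : Fin (n+1) → R) (i : Fin n) :
    descentDefect c n v i.succ = v i.castSucc - c * v i.succ := rfl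

theorem descentDefect_apply_eq_zero {v : Fin (n+1) → R} {m j : Fin (n+1)}
    (hv : ∀ i : Fin n, (m:ℕ) ≤ i → v i.castSucc = c * v i.succ) (hmj : m < j) :
    descentDefect c n v j = 0 := by
  cases j using Fin.cases with
  | zero => exact absurd hmj (Fin.not_lt_zero m)
  | succ i =>
    rw [descentDefect_apply_succ, hv i (Nat.lt_succ_iff.1 hmj), sub_self]

theorem descentDefect_apply_self_ne_zero {K : Type*} [Field K] {c d : K} (hdc : d ≠ c)
    {v : Fin (n+1) → K} {m : Fin (n+1)}
    (hv : ∀ i : Fin n, (i:ℕ) < m → v i.castSucc = d * v i.succ) (hne : ∀ i, v i ≠ 0) :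
    descentDefect c n v m ≠ 0 := by
  cases m using Fin.cases with
  | zero => exact hne 0
  | succ i =>
    rw [descentDefect_apply_succ, hv i (Nat.lt_succ_self i), ← sub_mul]
    exact mul_ne_zero (sub_ne_zero.2 hdc) (hne i.succ)

end DescentDefect

/-- The n+1 single-peaked ε-scales (the scale σ^{(l)} satisfies
σ_i = e^{-ε} σ_{i+1} for i < l and σ_i = e^ε σ_{i+1} for i ≥ l) form a basis of
ℝ^{n+1}: they are linearly independent and span. -/
theorem stmt18 (ε : ℝ) (hε : 0 < ε) (n : ℕ)
    (σ : Fin (n+1) → Fin (n+1) → ℝ)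
    (hscale : ∀ l, IsScale ε n (σ l))
    (hpeak : ∀ (l : Fin (n+1)) (i : Fin n),
      ((l:ℕ) ≤ (i:ℕ) → σ l i.castSucc = Real.exp ε * σ l i.succ) ∧
      ((i:ℕ) < (l:ℕ) → σ l i.castSucc = Real.exp (-ε) * σ l i.succ)) :
    LinearIndependent ℝ σ ∧ Submodule.span ℝ (Set.range σ) = ⊤ := by
  have hexp : Real.exp (-ε) ≠ Real.exp ε := (Real.exp_lt_exp.2 (neg_lt_self hε)).ne
  have hli : LinearIndependent ℝ σ := by
    refine .of_comp (descentDefect (Real.exp ε) n) (linearIndependent_of_upperTriangular ?_ ?_)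
    · intro j m hmj
      exact descentDefect_apply_eq_zero (fun i => (hpeak m i).1) hmj
    · intro m
      exact descentDefect_apply_self_ne_zero hexp (fun i => (hpeak m i).2)
        (hscale m).apply_ne_zero
  exact ⟨hli, hli.span_eq_top_of_card_eq_finrank (by simp)⟩
end
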